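/- Let p be a prime and let f : ℤ_p → ℤ_p be a compatible function that preserves the normalized Haar measure μ_p. Then f is a bijection of ℤ_p onto itself. -/

import Mathlib

open MeasureTheory Filter

/-- Borel measurable structure on the `p`-adic integers. -/
noncomputable instance padicMS (p : ℕ) [Fact p.Prime] : MeasurableSpace ℤ_[p] := borel _

instance padicBS (p : ℕ) [Fact p.Prime] : BorelSpace ℤ_[p] := ⟨rfl⟩

/-- The Haar measure `μ_p` on `ℤ_p`, normalized so that `μ_p(ℤ_p) = 1`. -/
noncomputable def padicHaar (p : ℕ) [Fact p.Prime] : Measure ℤ_[p] :=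
  Measure.addHaarMeasure (⊤ : TopologicalSpace.PositiveCompacts ℤ_[p])

/-- The map `f̄_k : ℤ/p^kℤ → ℤ/p^kℤ` induced by `f : ℤ_p → ℤ_p` via reduction
modulo `p^k` (well-defined whenever `f` is compatible, i.e. 1-Lipschitz). -/
noncomputable def modMap (p : ℕ) [Fact p.Prime] (f : ℤ_[p] → ℤ_[p]) (k : ℕ) :
    ZMod (p ^ k) → ZMod (p ^ k) :=
  fun z => PadicInt.toZModPow k (f ((z.val : ℕ) : ℤ_[p]))

/-- The map `F̄_k : (ℤ/p^kℤ)^n → (ℤ/p^kℤ)^m` induced by `F : ℤ_p^n → ℤ_p^m` via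
coordinatewise reduction modulo `p^k` (well-defined whenever `F` is compatible). -/
noncomputable def modMapV (p : ℕ) [Fact p.Prime] {n m : ℕ}
    (F : (Fin n → ℤ_[p]) → (Fin m → ℤ_[p])) (k : ℕ) :
    (Fin n → ZMod (p ^ k)) → (Fin m → ZMod (p ^ k)) :=
  fun v i => PadicInt.toZModPow k (F (fun j => ((v j).val : ℤ_[p])) i)

/-- The sphere `S_{p^{-r}}(y) = {z : ‖z - y‖ = p^{-r}}` in `ℤ_p`. -/
def padicSphere (p : ℕ) [Fact p.Prime] (y : ℤ_[p]) (r : ℕ) : Set ℤ_[p] :=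
  {z : ℤ_[p] | ‖z - y‖ = (p : ℝ) ^ (-(r : ℤ))}

/-- The probability measure on the sphere `S_{p^{-r}}(y)`, obtained by restricting the
normalized Haar measure `μ_p` to the sphere and normalizing. -/
noncomputable def sphereMeasure (p : ℕ) [Fact p.Prime] (y : ℤ_[p]) (r : ℕ) : Measure ℤ_[p] :=
  (padicHaar p (padicSphere p y r))⁻¹ • (padicHaar p).restrict (padicSphere p y r)

/-- `f` is ergodic on the sphere `S_{p^{-r}}(y)`: it maps the sphere into itself, preserves
the normalized restriction of the Haar measure to the sphere, and every invariant
measurable subset of the sphere has normalized measure `0` or `1`. -/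
def ErgodicOnSphere (p : ℕ) [Fact p.Prime] (f : ℤ_[p] → ℤ_[p]) (y : ℤ_[p]) (r : ℕ) : Prop :=
  Set.MapsTo f (padicSphere p y r) (padicSphere p y r) ∧
  (∀ A : Set ℤ_[p], MeasurableSet A →
      sphereMeasure p y r (f ⁻¹' A) = sphereMeasure p y r A) ∧
  (∀ A : Set ℤ_[p], MeasurableSet A → A ⊆ padicSphere p y r →
      f ⁻¹' A ∩ padicSphere p y r = A →
      sphereMeasure p y r A = 0 ∨ sphereMeasure p y r A = 1)

/-- `d ∈ ℤ_p` is primitive modulo `p²`: its image in `ℤ/p²ℤ` generates the whole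
group of units `(ℤ/p²ℤ)ˣ`. -/
def PrimitiveModSq (p : ℕ) [Fact p.Prime] (d : ℤ_[p]) : Prop :=
  ∃ u : (ZMod (p ^ 2))ˣ, (u : ZMod (p ^ 2)) = PadicInt.toZModPow 2 d ∧
    ∀ v : (ZMod (p ^ 2))ˣ, v ∈ Subgroup.zpowers u

/-!
Reduction modulo `p^k` semiconjugates a compatible `f` to the map `f̄_k` of `ℤ/p^kℤ`.
The fibres of the reduction are the balls of radius `p^{-k}`, which all have the same
positive finite Haar measure; if `f̄_k` identified two residues, the preimage under `f` of
one ball would contain two disjoint balls, contradicting measure preservation. So every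
`f̄_k` is injective, hence bijective as `ℤ/p^kℤ` is finite. Injectivity of all `f̄_k`
gives injectivity of `f`; surjectivity of all `f̄_k` makes the range of `f` dense, and
it is compact, so `f` is onto.
-/

open Function Metric

lemma injective_of_semiconj_of_measurePreserving {X Y : Type*} [MeasurableSpace X]
    {μ : Measure X} {π : X → Y} {f : X → X} {fbar : Y → Y} (hsemi : Semiconj π f fbar)
    (hf : ∀ A, MeasurableSet A → μ (f ⁻¹' A) = μ A) {c : ENNReal} (hc₀ : c ≠ 0)
    (hc : c ≠ ⊤) (hmeas : ∀ y, MeasurableSet (π ⁻¹' {y})) (hfib : ∀ y, μ (π ⁻¹' {y}) = c) :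
    Injective fbar := by
  intro a b hab
  by_contra hne
  have hsub : π ⁻¹' {a} ∪ π ⁻¹' {b} ⊆ f ⁻¹' (π ⁻¹' {fbar a}) := by
    rintro x (rfl | rfl) <;> simp [hsemi x, hab]
  have hdisj : Disjoint (π ⁻¹' {a}) (π ⁻¹' {b}) := (Set.disjoint_singleton.2 hne).preimage π
  have : c + c ≤ c :=
    calc c + c = μ (π ⁻¹' {a} ∪ π ⁻¹' {b}) := by rw [measure_union hdisj (hmeas b), hfib, hfib]
      _ ≤ μ (f ⁻¹' (π ⁻¹' {fbar a})) := measure_mono hsub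
      _ = c := by rw [hf _ (hmeas _), hfib]
  exact this.not_gt (ENNReal.lt_add_right hc hc₀)

namespace PadicInt

variable {p : ℕ} [Fact p.Prime]

lemma toZModPow_eq_iff_norm_sub_le {k : ℕ} {x y : ℤ_[p]} :
    toZModPow k x = toZModPow k y ↔ ‖x - y‖ ≤ (p : ℝ) ^ (-(k : ℤ)) := by
  rw [norm_le_pow_iff_mem_span_pow, ← ker_toZModPow, RingHom.mem_ker, map_sub, sub_eq_zero]

lemma preimage_toZModPow_singleton (k : ℕ) (x : ℤ_[p]) :
    toZModPow k ⁻¹' {toZModPow k x} = closedBall x ((p : ℝ) ^ (-(k : ℤ))) := by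
  ext z
  simp [toZModPow_eq_iff_norm_sub_le, dist_eq_norm]

lemma toZModPow_natCast_val (k : ℕ) (c : ZMod (p ^ k)) : toZModPow k (c.val : ℤ_[p]) = c := by
  rw [map_natCast, ZMod.natCast_zmod_val]

end PadicInt

instance (p : ℕ) [Fact p.Prime] : (padicHaar p).IsAddHaarMeasure := by
  unfold padicHaar
  infer_instance

section Compatible

open PadicInt

variable {p : ℕ} [Fact p.Prime] {f : ℤ_[p] → ℤ_[p]}

lemma semiconj_toZModPow_modMap (hf : ∀ x y : ℤ_[p], ‖f x - f y‖ ≤ ‖x - y‖) (k : ℕ) :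
    Semiconj (toZModPow k) f (modMap p f k) := fun _ ↦
  toZModPow_eq_iff_norm_sub_le.2 <| (hf _ _).trans <|
    toZModPow_eq_iff_norm_sub_le.1 (toZModPow_natCast_val k _).symm

lemma padicHaar_preimage_toZModPow (k : ℕ) (c : ZMod (p ^ k)) :
    padicHaar p (toZModPow k ⁻¹' {c}) = padicHaar p (closedBall 0 ((p : ℝ) ^ (-(k : ℤ)))) := by
  rw [← toZModPow_natCast_val k c, preimage_toZModPow_singleton,
    Measure.addHaar_closedBall_center]

lemma modMap_injective (hf : ∀ x y : ℤ_[p], ‖f x - f y‖ ≤ ‖x - y‖)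
    (hmp : ∀ A : Set ℤ_[p], MeasurableSet A → padicHaar p (f ⁻¹' A) = padicHaar p A) (k : ℕ) :
    Injective (modMap p f k) := by
  have hr : 0 < (p : ℝ) ^ (-(k : ℤ)) := zpow_pos (Nat.cast_pos.2 (Fact.out : p.Prime).pos) _
  refine injective_of_semiconj_of_measurePreserving (semiconj_toZModPow_modMap hf k) hmp
    (measure_closedBall_pos _ _ hr).ne' (measure_ne_top _ _) (fun c ↦ ?_)
    (padicHaar_preimage_toZModPow k)
  rw [← toZModPow_natCast_val k c, preimage_toZModPow_singleton]
  exact measurableSet_closedBall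

lemma injective_of_forall_modMap_injective (hf : ∀ x y : ℤ_[p], ‖f x - f y‖ ≤ ‖x - y‖)
    (hinj : ∀ k, Injective (modMap p f k)) : Injective f := fun x y hxy ↦
  ext_of_toZModPow.1 fun k ↦ hinj k <| by
    rw [← semiconj_toZModPow_modMap hf k x, ← semiconj_toZModPow_modMap hf k y, hxy]

lemma surjective_of_forall_modMap_surjective (hf : ∀ x y : ℤ_[p], ‖f x - f y‖ ≤ ‖x - y‖)
    (hsurj : ∀ k, Surjective (modMap p f k)) : Surjective f := by
  have hcont : Continuous f := LipschitzWith.continuous (K := 1) <|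
    LipschitzWith.of_dist_le_mul fun x y ↦ by simpa [dist_eq_norm] using hf x y
  have hdense : DenseRange f := by
    refine Metric.denseRange_iff.2 fun y ε hε ↦ ?_
    obtain ⟨k, hk⟩ := exists_pow_neg_lt p hε
    obtain ⟨c, hc⟩ := hsurj k (toZModPow k y)
    refine ⟨(c.val : ℤ_[p]), lt_of_le_of_lt ?_ hk⟩
    rw [dist_eq_norm, ← toZModPow_eq_iff_norm_sub_le]
    exact hc.symm
  rw [← Set.range_eq_univ, ← (isCompact_range hcont).isClosed.closure_eq]
  exact hdense.closure_range

end Compatible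

/-- A compatible (1-Lipschitz) function `f : ℤ_p → ℤ_p` that preserves the normalized
Haar measure `μ_p` is a bijection of `ℤ_p` onto itself. -/
theorem bijective_of_compatible_measurePreserving (p : ℕ) [Fact p.Prime]
    (f : ℤ_[p] → ℤ_[p]) (hf : ∀ x y : ℤ_[p], ‖f x - f y‖ ≤ ‖x - y‖)
    (hmp : ∀ A : Set ℤ_[p], MeasurableSet A → padicHaar p (f ⁻¹' A) = padicHaar p A) :
    Function.Bijective f := by
  have hinj := modMap_injective hf hmp
  exact ⟨injective_of_forall_modMap_injective hf hinj,
    surjective_of_forall_modMap_surjective hf fun k ↦ Finite.injective_iff_surjective.1 (hinj k)⟩
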